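/- Suppose K is a symmetric positive-definite n×n matrix partitioned into blocks K_{ij} ∈ ℝ^{n_i × n_j} each of which has constant row sums S_{ij}. Then the J×J matrix S with entries S_{ij} is non-singular. -/

import Mathlib

/-!
Lifting a vector `x` indexed by blocks to the blockwise constant vector `x ∘ Sigma.fst`
intertwines `S` with `K`: `K *ᵥ (x ∘ Sigma.fst) = (S *ᵥ x) ∘ Sigma.fst`. The lift is injective
because no block is empty, and `K` is injective because it is positive definite, so `S` is
injective as well.
-/

open Matrix

namespace Matrix

variable {ι ι' R : Type*} [Fintype ι'] {κ : ι → Type*} {μ : ι' → Type*} [∀ j, Fintype (μ j)]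
  [NonUnitalNonAssocSemiring R]

theorem mulVec_comp_sigmaFst {K : Matrix (Σ i, κ i) (Σ j, μ j) R} {S : Matrix ι ι' R}
    (hS : ∀ i j p, ∑ q, K ⟨i, p⟩ ⟨j, q⟩ = S i j) (x : ι' → R) :
    K *ᵥ (x ∘ Sigma.fst) = (S *ᵥ x) ∘ Sigma.fst := by
  funext ⟨i, p⟩
  simp only [mulVec, dotProduct, Function.comp_apply, ← Finset.univ_sigma_univ, Finset.sum_sigma,
    ← Finset.sum_mul, hS]

end Matrix

/-- If a symmetric positive-definite matrix `K` has a block structure in which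
every block has constant row sums `S i j`, then the matrix `S` of row sums is
non-singular. -/
theorem rowSumMatrix_nonsingular {J : ℕ} (n : Fin J → ℕ) (hn : ∀ i, 0 < n i)
    (K : Matrix ((i : Fin J) × Fin (n i)) ((i : Fin J) × Fin (n i)) ℝ)
    (hKpd : K.PosDef)
    (S : Matrix (Fin J) (Fin J) ℝ)
    (hS : ∀ (i j : Fin J) (p : Fin (n i)), ∑ q : Fin (n j), K ⟨i, p⟩ ⟨j, q⟩ = S i j) :
    IsUnit S.det := by
  have : ∀ i, Nonempty (Fin (n i)) := fun i => Fin.pos_iff_nonempty.1 (hn i)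
  have hK : Function.Injective K.mulVec := mulVec_injective_iff_isUnit.2 hKpd.isUnit
  rw [← isUnit_iff_isUnit_det, ← mulVec_injective_iff_isUnit]
  intro x y hxy
  apply (Sigma.fst_surjective (β := fun i => Fin (n i))).injective_comp_right
  apply hK
  simp only [mulVec_comp_sigmaFst hS, hxy]
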